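/- Fix 0 < q < 1 and consider the Markov chain M_n = max(M_{n-1}, Z_n) - 1 driven by i.i.d. Geometric(1-q) variables. There exist positive constants A = A(q) and c = c(q) such that for all integers t ≥ 0 and all real s ≥ 0, P_t(R_0^+ > 10t + s) ≤ A e^{-cs}, where R_0^+ = min{k > 0 : M_k = 0}. More generally, for every integer v ≥ 0, P_{t+v}(R_v^+ > 10t + s) ≤ A e^{-cs}, where R_v^+ = min{k > 0 : M_k ≤ v} is the first return time to or below v. -/

import Mathlib

/-!
Writing `Y` for the chain started at `0`, one has `M_k = max (M_0 - k, Y_k)`, so from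
`M_0 = t + v` the level `v` is reached by any time `k ≥ t` with `Y_k = 0`; it suffices to show
that `Y` stays positive at the checkpoints `t + L, t + 2L, …, t + rL` with probability at most
`ρ ^ r`. Over a block of `L` steps, `Y` either falls by `L` or is re-created by the block's own
variables, which are independent of the past. Started afresh, the block ends at `0` with
probability at least `θ = exp (-q / (1 - q) ^ 2)` and above `a` with probability at most
`q ^ (a + 1) / (1 - q)`. An induction over the checkpoints, carrying along a geometric bound
on the level of `Y` at the last checkpoint, gives the decay `ρ ^ r` once `L` is large.
-/

open MeasureTheory
open scoped ENNReal

noncomputable section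

/-- The chain `M_0 = m0`, `M_n = max (M_{n-1}, Z_n) - 1`. -/
def chainM (m0 : ℕ) (z : ℕ → ℕ) : ℕ → ℕ
  | 0 => m0
  | n + 1 => max (chainM m0 z n) (z (n + 1)) - 1

/-- The first return time to `0`, `R_0^+ = min {k > 0 : M_k = 0}`, of a trajectory `M`,
as an element of `ℝ≥0∞` (equal to `∞` if the chain never returns to `0`). -/
noncomputable def retTimeZero (M : ℕ → ℕ) : ℝ≥0∞ :=
  ⨅ (k : ℕ) (_ : 0 < k ∧ M k = 0), (k : ℝ≥0∞)

/-- The first time `R_v^+ = min {k > 0 : M_k ≤ v}` the trajectory `M` reaches level `v`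
or below, as an element of `ℝ≥0∞` (equal to `∞` if this never happens). -/
noncomputable def retTimeLe (M : ℕ → ℕ) (v : ℕ) : ℝ≥0∞ :=
  ⨅ (k : ℕ) (_ : 0 < k ∧ M k ≤ v), (k : ℝ≥0∞)

open ProbabilityTheory

theorem chainM_add (m : ℕ) (z : ℕ → ℕ) (k n : ℕ) :
    chainM m z (k + n) = max (chainM m z k - n) (chainM 0 (fun i => z (k + i)) n) := by
  induction n with
  | zero => simp [chainM]
  | succ n ih =>
    rw [← add_assoc, chainM, ih, chainM, add_assoc]
    omega

theorem chainM_eq_max (m : ℕ) (z : ℕ → ℕ) (n : ℕ) :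
    chainM m z n = max (m - n) (chainM 0 z n) := by
  simpa [chainM] using chainM_add m z 0 n

theorem lt_chainM_add_iff (m : ℕ) (z : ℕ → ℕ) (a k n : ℕ) :
    a < chainM m z (k + n) ↔ a + n < chainM m z k ∨ a < chainM 0 (fun i => z (k + i)) n := by
  rw [chainM_add]
  omega

theorem chainM_congr {m n : ℕ} {z z' : ℕ → ℕ} (h : ∀ j ∈ Set.Icc 1 n, z j = z' j) :
    chainM m z n = chainM m z' n := by
  induction n with
  | zero => rfl
  | succ n ih =>
    simp only [chainM, ih fun j hj => h j ⟨hj.1, hj.2.trans n.le_succ⟩,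
      h (n + 1) ⟨n.succ_pos, le_rfl⟩]

theorem chainM_zero_le_iff (z : ℕ → ℕ) (n a : ℕ) :
    chainM 0 z n ≤ a ↔ ∀ j ∈ Finset.Icc 1 n, z j ≤ a + (n - j) + 1 := by
  induction n generalizing a with
  | zero => simp [chainM]
  | succ n ih =>
    have hstep : chainM 0 z (n + 1) ≤ a ↔ chainM 0 z n ≤ a + 1 ∧ z (n + 1) ≤ a + 1 := by
      simp only [chainM]; omega
    rw [hstep, ih, ← Finset.insert_Icc_right_eq_Icc_add_one (by omega),
      Finset.forall_mem_insert]
    refine and_comm.trans (and_congr (by omega) (forall₂_congr fun j hj => ?_))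
    rw [Finset.mem_Icc] at hj
    omega

theorem retTimeZero_eq_retTimeLe_zero (M : ℕ → ℕ) : retTimeZero M = retTimeLe M 0 := by
  simp only [retTimeZero, retTimeLe, Nat.le_zero]

theorem retTimeLe_chainM_le {z : ℕ → ℕ} {t v k : ℕ} (hk : 0 < k) (htk : t ≤ k)
    (hzero : chainM 0 z k = 0) : retTimeLe (chainM (t + v) z) v ≤ k :=
  iInf₂_le k ⟨hk, by rw [chainM_eq_max]; omega⟩

def PositiveAtCheckpoints (t L r : ℕ) (z : ℕ → ℕ) : Prop :=
  ∀ i ∈ Finset.Icc 1 r, 0 < chainM 0 z (t + i * L)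

theorem positiveAtCheckpoints_succ_iff {t L r : ℕ} {z : ℕ → ℕ} :
    PositiveAtCheckpoints t L (r + 1) z
      ↔ PositiveAtCheckpoints t L r z ∧ 0 < chainM 0 z (t + (r + 1) * L) := by
  rw [PositiveAtCheckpoints, ← Finset.insert_Icc_right_eq_Icc_add_one (by omega),
    Finset.forall_mem_insert, and_comm]
  rfl

theorem dependsOn_positiveAtCheckpoints (t L r : ℕ) :
    DependsOn (PositiveAtCheckpoints t L r) ↑(Finset.Icc 1 (t + r * L)) := by
  intro z z' h
  refine propext (forall₂_congr fun i hi => ?_)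
  rw [chainM_congr fun j hj => h j ?_]
  simp only [Finset.coe_Icc, Set.mem_Icc, Finset.mem_Icc] at hi hj ⊢
  exact ⟨hj.1, hj.2.trans (by gcongr; exact hi.2)⟩

theorem dependsOn_lt_chainM_shift (a k n : ℕ) :
    DependsOn (fun z : ℕ → ℕ => a < chainM 0 (fun i => z (k + i)) n)
      ↑(Finset.Ioc k (k + n)) := by
  intro z z' h
  dsimp only
  rw [chainM_congr fun j hj => h (k + j) ?_]
  simp only [Finset.coe_Ioc, Set.mem_Ioc, Set.mem_Icc] at hj ⊢
  omega

theorem positiveAtCheckpoints_of_lt_retTimeLe {z : ℕ → ℕ} {t v L : ℕ} {s : ℝ} (hL : 0 < L)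
    (hs : 0 ≤ s) (h : ENNReal.ofReal (10 * t + s) < retTimeLe (chainM (t + v) z) v) :
    PositiveAtCheckpoints t L ⌊s / L⌋₊ z := by
  intro i hi
  rw [Finset.mem_Icc] at hi
  by_contra! hzero
  have hret := retTimeLe_chainM_le (v := v) (Nat.add_pos_right t (Nat.mul_pos hi.1 hL))
    (Nat.le_add_right t (i * L)) (Nat.le_zero.1 hzero)
  refine h.not_ge (hret.trans ?_)
  have hiL : (i : ℝ) * L ≤ s :=
    (le_div_iff₀ (by exact_mod_cast hL)).1 ((Nat.le_floor_iff (by positivity)).1 hi.2)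
  rw [← ENNReal.ofReal_natCast]
  exact ENNReal.ofReal_le_ofReal (by push_cast; linarith [(Nat.cast_nonneg t : (0 : ℝ) ≤ t)])

theorem sum_Icc_pow_le {q : ℝ} (hq0 : 0 ≤ q) (hq1 : q < 1) (a n : ℕ) :
    ∑ j ∈ Finset.Icc 1 n, q ^ (a + (n - j) + 1) ≤ q ^ (a + 1) / (1 - q) := by
  rw [← Finset.Ico_add_one_right_eq_Icc,
    Finset.sum_Ico_reflect (fun i => q ^ (a + i + 1)) 1 le_rfl]
  simp only [Nat.sub_self, Nat.add_sub_cancel]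
  calc ∑ i ∈ Finset.Ico 0 n, q ^ (a + i + 1)
        = q ^ (a + 1) * ∑ i ∈ Finset.Ico 0 n, q ^ i := by
        rw [Finset.mul_sum]; exact Finset.sum_congr rfl fun i _ => by ring
    _ ≤ q ^ (a + 1) * (q ^ 0 / (1 - q)) :=
        mul_le_mul_of_nonneg_left (geom_sum_Ico_le_of_lt_one hq0 hq1) (by positivity)
    _ = q ^ (a + 1) / (1 - q) := by ring

theorem exp_neg_div_le_one_sub {q y : ℝ} (hy0 : 0 ≤ y) (hy : y ≤ q) (hq1 : q < 1) :
    Real.exp (-(y / (1 - q))) ≤ 1 - y := by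
  have hy1 : 0 < 1 - y := by linarith
  rw [← Real.le_log_iff_exp_le hy1]
  calc -(y / (1 - q)) ≤ -(y / (1 - y)) :=
        neg_le_neg (div_le_div_of_nonneg_left hy0 (by linarith) (by linarith))
    _ = 1 - (1 - y)⁻¹ := by field_simp; ring
    _ ≤ Real.log (1 - y) := Real.one_sub_inv_le_log_of_pos hy1

theorem pow_floor_div_le {ρ s : ℝ} {L : ℕ} (hρ0 : 0 < ρ) (hρ1 : ρ ≤ 1) :
    ρ ^ ⌊s / L⌋₊ ≤ ρ⁻¹ * Real.exp (-(-Real.log ρ / L) * s) := by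
  calc ρ ^ ⌊s / L⌋₊ = Real.exp (⌊s / L⌋₊ * Real.log ρ) := by
        rw [Real.exp_nat_mul, Real.exp_log hρ0]
    _ ≤ Real.exp ((s / L - 1) * Real.log ρ) :=
        Real.exp_le_exp.2 (mul_le_mul_of_nonpos_right (Nat.sub_one_lt_floor _).le
          (Real.log_nonpos hρ0.le hρ1))
    _ = ρ⁻¹ * Real.exp (-(-Real.log ρ / L) * s) := by
        rw [← Real.exp_log (inv_pos.2 hρ0), ← Real.exp_add, Real.log_inv]
        ring_nf

theorem exists_checkpoint_constants {q : ℝ} (hq0 : 0 ≤ q) (hq1 : q < 1) :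
    ∃ L : ℕ, 0 < L ∧ ∃ ρ K : ℝ, 0 < ρ ∧ ρ < 1 ∧ 1 / (1 - q) ≤ K
      ∧ K * q ^ (L + 1) + (1 - Real.exp (-(q / (1 - q) ^ 2))) ≤ ρ
      ∧ K * q ^ L + 1 / (1 - q) ≤ ρ * K := by
  set θ := Real.exp (-(q / (1 - q) ^ 2))
  have hq : 0 < 1 - q := sub_pos.2 hq1
  have hθ0 : 0 < θ := Real.exp_pos _
  have hθ1 : θ ≤ 1 := Real.exp_le_one_iff.2 (neg_nonpos.2 (by positivity))
  obtain ⟨L, hL⟩ := exists_pow_lt_of_lt_one (by positivity : 0 < θ * (1 - q) / 8) hq1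
  have hqL : q ^ (L + 1) ≤ q ^ L := pow_le_pow_of_le_one hq0 hq1.le (Nat.le_succ L)
  refine ⟨L, Nat.pos_of_ne_zero fun h => ?_, 1 - θ / 2, 4 / (1 - q), by linarith, by linarith,
    div_le_div_of_nonneg_right (by norm_num) hq.le, ?_, ?_⟩
  · subst h
    nlinarith
  · rw [div_mul_eq_mul_div]
    have : 4 * q ^ (L + 1) / (1 - q) ≤ θ / 2 := by
      rw [div_le_iff₀ hq]; nlinarith
    linarith
  · rw [div_mul_eq_mul_div, ← add_div, mul_div_assoc', div_le_div_iff_of_pos_right hq]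
    nlinarith

theorem ProbabilityTheory.iIndepFun.measure_setOf_and_eq_mul {Ω ι β : Type*}
    [MeasurableSpace Ω] {P : Measure Ω}
    [MeasurableSpace β] [MeasurableSingletonClass β] [Countable β]
    {Z : ι → Ω → β} (hZ : iIndepFun Z P) (hmeas : ∀ i, Measurable (Z i))
    {S T : Finset ι} (hST : Disjoint S T) {A B : (ι → β) → Prop}
    (hA : DependsOn A S) (hB : DependsOn B T) :
    P {ω | A (fun i => Z i ω) ∧ B (fun i => Z i ω)}
      = P {ω | A (fun i => Z i ω)} * P {ω | B (fun i => Z i ω)} := by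
  obtain ⟨f, hf⟩ := dependsOn_iff_exists_comp.1 hA
  obtain ⟨g, hg⟩ := dependsOn_iff_exists_comp.1 hB
  simp only [hf, hg, Function.comp_apply]
  exact (hZ.indepFun_finset S T hST hmeas).measure_inter_preimage_eq_mul _ _
    (Set.to_countable _).measurableSet (Set.to_countable _).measurableSet

structure IsGeometricIID {Ω : Type*} [MeasurableSpace Ω] (P : Measure Ω) (q : ℝ)
    (Z : ℕ → Ω → ℕ) : Prop where
  measurable : ∀ i, Measurable (Z i)
  iIndepFun : iIndepFun Z P
  measure_eq : ∀ i k, 1 ≤ k → P {ω | Z i ω = k} = ENNReal.ofReal ((1 - q) * q ^ (k - 1))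

namespace IsGeometricIID

variable {Ω : Type*} [MeasurableSpace Ω] {P : Measure Ω} {q : ℝ} {Z : ℕ → Ω → ℕ}

theorem shift (hZ : IsGeometricIID P q Z) (k : ℕ) :
    IsGeometricIID P q (fun i => Z (k + i)) where
  measurable i := hZ.measurable (k + i)
  iIndepFun := hZ.iIndepFun.precomp (add_right_injective k)
  measure_eq i := hZ.measure_eq (k + i)

theorem measure_lt (hZ : IsGeometricIID P q Z) (hq0 : 0 ≤ q) (hq1 : q < 1) (i x : ℕ) :
    P {ω | x < Z i ω} = ENNReal.ofReal (q ^ x) := by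
  have hunion : {ω | x < Z i ω} = ⋃ n : ℕ, {ω | Z i ω = x + 1 + n} := by
    ext ω
    simp only [Set.mem_ofPred_eq, Set.mem_iUnion]
    exact ⟨fun h => ⟨Z i ω - (x + 1), by omega⟩, fun ⟨n, hn⟩ => by omega⟩
  have hdisj : Pairwise (Function.onFun Disjoint fun n : ℕ => {ω | Z i ω = x + 1 + n}) :=
    fun a b hab => Set.disjoint_left.2 fun ω h1 h2 => hab (by simp_all)
  have hterm (n : ℕ) :
      P {ω | Z i ω = x + 1 + n} = ENNReal.ofReal ((1 - q) * q ^ x * q ^ n) := by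
    rw [hZ.measure_eq i _ (by omega), Nat.add_right_comm, Nat.add_sub_cancel, pow_add, mul_assoc]
  have hsum : ∑' n : ℕ, (1 - q) * q ^ x * q ^ n = q ^ x := by
    rw [tsum_mul_left, tsum_geometric_of_lt_one hq0 hq1]
    field_simp [(sub_pos.2 hq1).ne']
  rw [hunion, measure_iUnion hdisj fun n => hZ.measurable i (measurableSet_singleton _),
    funext hterm, ← ENNReal.ofReal_tsum_of_nonneg (fun n => by have := sub_pos.2 hq1; positivity)
      ((summable_geometric_of_lt_one hq0 hq1).mul_left _), hsum]

theorem measureReal_lt (hZ : IsGeometricIID P q Z) (hq0 : 0 ≤ q) (hq1 : q < 1) (i x : ℕ) :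
    P.real {ω | x < Z i ω} = q ^ x := by
  rw [measureReal_def, hZ.measure_lt hq0 hq1, ENNReal.toReal_ofReal (by positivity)]

variable [IsProbabilityMeasure P]

theorem measureReal_le (hZ : IsGeometricIID P q Z) (hq0 : 0 ≤ q) (hq1 : q < 1) (i x : ℕ) :
    P.real {ω | Z i ω ≤ x} = 1 - q ^ x := by
  have hcompl : {ω | Z i ω ≤ x} = {ω | x < Z i ω}ᶜ := by ext; simp
  rw [hcompl, probReal_compl_eq_one_sub (measurableSet_lt measurable_const (hZ.measurable i)),
    hZ.measureReal_lt hq0 hq1]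

theorem measureReal_lt_chainM_zero_le (hZ : IsGeometricIID P q Z) (hq0 : 0 ≤ q) (hq1 : q < 1)
    (a n : ℕ) :
    P.real {ω | a < chainM 0 (fun i => Z i ω) n} ≤ q ^ (a + 1) / (1 - q) := by
  have hsub : {ω | a < chainM 0 (fun i => Z i ω) n}
      ⊆ ⋃ j ∈ Finset.Icc 1 n, {ω | a + (n - j) + 1 < Z j ω} := by
    intro ω hω
    obtain ⟨j, hj, hlt⟩ := not_forall₂.1 ((chainM_zero_le_iff _ n a).not.1 (not_le.2 hω))
    exact Set.mem_biUnion hj (not_le.1 hlt)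
  calc P.real {ω | a < chainM 0 (fun i => Z i ω) n}
      ≤ ∑ j ∈ Finset.Icc 1 n, P.real {ω | a + (n - j) + 1 < Z j ω} :=
        (measureReal_mono hsub (measure_ne_top _ _)).trans (measureReal_biUnion_finset_le _ _)
    _ = ∑ j ∈ Finset.Icc 1 n, q ^ (a + (n - j) + 1) := by
        simp only [hZ.measureReal_lt hq0 hq1]
    _ ≤ q ^ (a + 1) / (1 - q) := sum_Icc_pow_le hq0 hq1 a n

theorem measureReal_chainM_zero_pos_le (hZ : IsGeometricIID P q Z) (hq0 : 0 ≤ q) (hq1 : q < 1)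
    (n : ℕ) :
    P.real {ω | 0 < chainM 0 (fun i => Z i ω) n} ≤ 1 - Real.exp (-(q / (1 - q) ^ 2)) := by
  have hinter : {ω | chainM 0 (fun i => Z i ω) n ≤ 0}
      = ⋂ j ∈ Finset.Icc 1 n, Z j ⁻¹' Set.Iic ((n - j) + 1) := by
    ext ω
    simp only [Set.mem_ofPred_eq, Set.mem_iInter, chainM_zero_le_iff, zero_add]
    rfl
  have hprod : P.real {ω | chainM 0 (fun i => Z i ω) n ≤ 0}
      = ∏ j ∈ Finset.Icc 1 n, (1 - q ^ ((n - j) + 1)) := by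
    rw [hinter, measureReal_def, hZ.iIndepFun.meas_biInter
      fun j _ => ⟨Set.Iic _, measurableSet_Iic, rfl⟩, ENNReal.toReal_prod]
    exact Finset.prod_congr rfl fun j _ => hZ.measureReal_le hq0 hq1 j _
  have hexp : Real.exp (-(q / (1 - q) ^ 2)) ≤ ∏ j ∈ Finset.Icc 1 n, (1 - q ^ ((n - j) + 1)) :=
    calc Real.exp (-(q / (1 - q) ^ 2))
        ≤ Real.exp (∑ j ∈ Finset.Icc 1 n, -(q ^ ((n - j) + 1) / (1 - q))) := by
          have := sum_Icc_pow_le hq0 hq1 0 n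
          simp only [zero_add, pow_one] at this
          rw [Real.exp_le_exp, Finset.sum_neg_distrib, ← Finset.sum_div, sq, ← div_div]
          exact neg_le_neg (div_le_div_of_nonneg_right this (by linarith))
      _ = ∏ j ∈ Finset.Icc 1 n, Real.exp (-(q ^ ((n - j) + 1) / (1 - q))) := Real.exp_sum _ _
      _ ≤ ∏ j ∈ Finset.Icc 1 n, (1 - q ^ ((n - j) + 1)) :=
          Finset.prod_le_prod (fun _ _ => (Real.exp_pos _).le) fun j _ =>
            exp_neg_div_le_one_sub (by positivity) (pow_le_of_le_one hq0 hq1.le (by omega)) hq1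
  have hcompl : {ω | 0 < chainM 0 (fun i => Z i ω) n}
      = {ω | chainM 0 (fun i => Z i ω) n ≤ 0}ᶜ := by
    ext; simp only [Set.mem_ofPred_eq, Set.mem_compl_iff, not_le]
  rw [hcompl, probReal_compl_eq_one_sub (hinter ▸ Finset.measurableSet_biInter _
    fun j _ => hZ.measurable j measurableSet_Iic), hprod]
  linarith

theorem measureReal_positiveAtCheckpoints_succ_le (hZ : IsGeometricIID P q Z) (t L r a : ℕ) :
    P.real {ω | PositiveAtCheckpoints t L (r + 1) (fun i => Z i ω)
        ∧ a < chainM 0 (fun i => Z i ω) (t + (r + 1) * L)}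
      ≤ P.real {ω | PositiveAtCheckpoints t L r (fun i => Z i ω)
          ∧ a + L < chainM 0 (fun i => Z i ω) (t + r * L)}
        + P.real {ω | PositiveAtCheckpoints t L r (fun i => Z i ω)}
          * P.real {ω | a < chainM 0 (fun i => Z (t + r * L + i) ω) L} := by
  have hk : t + (r + 1) * L = t + r * L + L := by ring
  have hsub : {ω | PositiveAtCheckpoints t L (r + 1) (fun i => Z i ω)
        ∧ a < chainM 0 (fun i => Z i ω) (t + (r + 1) * L)}
      ⊆ {ω | PositiveAtCheckpoints t L r (fun i => Z i ω)
          ∧ a + L < chainM 0 (fun i => Z i ω) (t + r * L)}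
        ∪ {ω | PositiveAtCheckpoints t L r (fun i => Z i ω)
          ∧ a < chainM 0 (fun i => Z (t + r * L + i) ω) L} := by
    rintro ω ⟨hpos, hlt⟩
    rw [hk, lt_chainM_add_iff] at hlt
    exact hlt.imp (⟨(positiveAtCheckpoints_succ_iff.1 hpos).1, ·⟩)
      (⟨(positiveAtCheckpoints_succ_iff.1 hpos).1, ·⟩)
  have hindep := iIndepFun.measure_setOf_and_eq_mul hZ.iIndepFun hZ.measurable
    (Finset.disjoint_left.2 fun j hj hj' => by
      rw [Finset.mem_Icc] at hj; rw [Finset.mem_Ioc] at hj'; omega)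
    (dependsOn_positiveAtCheckpoints t L r) (dependsOn_lt_chainM_shift a (t + r * L) L)
  calc _ ≤ _ := measureReal_mono hsub (measure_ne_top _ _)
    _ ≤ _ := measureReal_union_le _ _
    _ = _ := by
      simp only at hindep
      simp only [measureReal_def, hindep, ENNReal.toReal_mul]

theorem measureReal_positiveAtCheckpoints_le (hZ : IsGeometricIID P q Z) (hq0 : 0 ≤ q)
    (hq1 : q < 1) {L : ℕ} {ρ K : ℝ} (hK : 1 / (1 - q) ≤ K)
    (hρ : K * q ^ (L + 1) + (1 - Real.exp (-(q / (1 - q) ^ 2))) ≤ ρ)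
    (hρK : K * q ^ L + 1 / (1 - q) ≤ ρ * K) (t r : ℕ) :
    P.real {ω | PositiveAtCheckpoints t L r (fun i => Z i ω)} ≤ ρ ^ r
      ∧ ∀ a, P.real {ω | PositiveAtCheckpoints t L r (fun i => Z i ω)
          ∧ a < chainM 0 (fun i => Z i ω) (t + r * L)} ≤ K * ρ ^ r * q ^ (a + 1) := by
  have hq : 0 < 1 - q := sub_pos.2 hq1
  have hθ : Real.exp (-(q / (1 - q) ^ 2)) ≤ 1 :=
    Real.exp_le_one_iff.2 (neg_nonpos.2 (by positivity))
  have hK0 : 0 ≤ K := (by positivity : (0 : ℝ) ≤ 1 / (1 - q)).trans hK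
  have hρ0 : 0 ≤ ρ := by linarith [mul_nonneg hK0 (pow_nonneg hq0 (L + 1))]
  induction r with
  | zero =>
    refine ⟨by rw [pow_zero]; exact measureReal_le_one, fun a => ?_⟩
    calc _ ≤ P.real {ω | a < chainM 0 (fun i => Z i ω) (t + 0 * L)} :=
          measureReal_mono (fun ω h => h.2) (measure_ne_top _ _)
      _ ≤ q ^ (a + 1) / (1 - q) := hZ.measureReal_lt_chainM_zero_le hq0 hq1 _ _
      _ ≤ K * ρ ^ 0 * q ^ (a + 1) := by
          rw [pow_zero, mul_one, div_eq_mul_one_div, mul_comm]; gcongr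
  | succ r ih =>
    obtain ⟨ihpos, ihlt⟩ := ih
    have hstep (a : ℕ) (B : ℝ)
        (hB : P.real {ω | a < chainM 0 (fun i => Z (t + r * L + i) ω) L} ≤ B) :
        P.real {ω | PositiveAtCheckpoints t L (r + 1) (fun i => Z i ω)
          ∧ a < chainM 0 (fun i => Z i ω) (t + (r + 1) * L)}
          ≤ K * ρ ^ r * q ^ (a + L + 1) + ρ ^ r * B :=
      (hZ.measureReal_positiveAtCheckpoints_succ_le t L r a).trans
        (add_le_add (ihlt (a + L)) (mul_le_mul ihpos hB measureReal_nonneg (by positivity)))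
    constructor
    · have hset : {ω | PositiveAtCheckpoints t L (r + 1) (fun i => Z i ω)}
          = {ω | PositiveAtCheckpoints t L (r + 1) (fun i => Z i ω)
            ∧ 0 < chainM 0 (fun i => Z i ω) (t + (r + 1) * L)} := by
        ext ω
        exact ⟨fun h => ⟨h, (positiveAtCheckpoints_succ_iff.1 h).2⟩, And.left⟩
      calc _ ≤ K * ρ ^ r * q ^ (0 + L + 1) + ρ ^ r * (1 - Real.exp (-(q / (1 - q) ^ 2))) :=
            hset ▸ hstep 0 _ ((hZ.shift _).measureReal_chainM_zero_pos_le hq0 hq1 L)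
        _ = ρ ^ r * (K * q ^ (L + 1) + (1 - Real.exp (-(q / (1 - q) ^ 2)))) := by ring_nf
        _ ≤ ρ ^ (r + 1) := by rw [pow_succ]; exact mul_le_mul_of_nonneg_left hρ (by positivity)
    · intro a
      calc _ ≤ K * ρ ^ r * q ^ (a + L + 1) + ρ ^ r * (q ^ (a + 1) / (1 - q)) :=
            hstep a _ ((hZ.shift _).measureReal_lt_chainM_zero_le hq0 hq1 a L)
        _ = ρ ^ r * q ^ (a + 1) * (K * q ^ L + 1 / (1 - q)) := by ring
        _ ≤ ρ ^ r * q ^ (a + 1) * (ρ * K) := by gcongr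
        _ = K * ρ ^ (r + 1) * q ^ (a + 1) := by ring

end IsGeometricIID

theorem return_time_exponential_tail_general
    {Ω : Type*} [MeasurableSpace Ω] (P : Measure Ω) [IsProbabilityMeasure P]
    (q : ℝ) (hq0 : 0 < q) (hq1 : q < 1)
    (Z : ℕ → Ω → ℕ)
    (hmeas : ∀ i, Measurable (Z i))
    (hindep : ProbabilityTheory.iIndepFun Z P)
    (hgeom : ∀ i k, 1 ≤ k →
      P {ω | Z i ω = k} = ENNReal.ofReal ((1 - q) * q ^ (k - 1))) :
    ∃ A > (0 : ℝ), ∃ c > (0 : ℝ),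
      (∀ t : ℕ, ∀ s : ℝ, 0 ≤ s →
        P {ω | ENNReal.ofReal (10 * t + s)
            < retTimeZero (chainM t (fun n => Z n ω))}
          ≤ ENNReal.ofReal (A * Real.exp (-c * s)))
      ∧ ∀ v t : ℕ, ∀ s : ℝ, 0 ≤ s →
          P {ω | ENNReal.ofReal (10 * t + s)
              < retTimeLe (chainM (t + v) (fun n => Z n ω)) v}
            ≤ ENNReal.ofReal (A * Real.exp (-c * s)) := by
  have hZ : IsGeometricIID P q Z := ⟨hmeas, hindep, hgeom⟩
  obtain ⟨L, hL, ρ, K, hρ0, hρ1, hK, hρ, hρK⟩ := exists_checkpoint_constants hq0.le hq1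
  have hmain : ∀ v t : ℕ, ∀ s : ℝ, 0 ≤ s →
      P {ω | ENNReal.ofReal (10 * t + s) < retTimeLe (chainM (t + v) (fun n => Z n ω)) v}
        ≤ ENNReal.ofReal (ρ⁻¹ * Real.exp (-(-Real.log ρ / L) * s)) := by
    intro v t s hs
    set E := {ω | PositiveAtCheckpoints t L ⌊s / L⌋₊ (fun n => Z n ω)}
    calc _ ≤ P E := measure_mono fun ω => positiveAtCheckpoints_of_lt_retTimeLe hL hs
      _ = ENNReal.ofReal (P.real E) := (ofReal_measureReal (measure_ne_top _ _)).symm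
      _ ≤ _ := ENNReal.ofReal_le_ofReal
          ((hZ.measureReal_positiveAtCheckpoints_le hq0.le hq1 hK hρ hρK t _).1.trans
            (pow_floor_div_le hρ0 hρ1.le))
  refine ⟨ρ⁻¹, inv_pos.2 hρ0, -Real.log ρ / L,
    div_pos (neg_pos.2 (Real.log_neg hρ0 hρ1)) (Nat.cast_pos.2 hL), fun t s hs => ?_, hmain⟩
  simpa only [retTimeZero_eq_retTimeLe_zero, add_zero] using hmain 0 t s hs

/-- **Exponential tails for return times (Proposition 4.7).** For the chain
`M_n = max(M_{n-1}, Z_n) - 1` driven by i.i.d. Geometric(1-q) variables, there exist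
`A = A(q) > 0` and `c = c(q) > 0` such that for all integers `t ≥ 0` and reals `s ≥ 0`,
`P_t(R_0^+ > 10 t + s) ≤ A e^{-c s}`, and more generally for all `v ≥ 0`,
`P_{t+v}(R_v^+ > 10 t + s) ≤ A e^{-c s}`. -/
theorem return_time_exponential_tail
    {Ω : Type*} [MeasurableSpace Ω] (P : Measure Ω) [IsProbabilityMeasure P]
    (q : ℝ) (hq0 : 0 < q) (hq1 : q < 1)
    (Z : ℕ → Ω → ℕ)
    (hmeas : ∀ i, Measurable (Z i))
    (hindep : ProbabilityTheory.iIndepFun Z P)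
    (hpos : ∀ i ω, 1 ≤ Z i ω)
    (hgeom : ∀ i k, 1 ≤ k →
      P {ω | Z i ω = k} = ENNReal.ofReal ((1 - q) * q ^ (k - 1))) :
    ∃ A > (0 : ℝ), ∃ c > (0 : ℝ),
      (∀ t : ℕ, ∀ s : ℝ, 0 ≤ s →
        P {ω | ENNReal.ofReal (10 * t + s)
            < retTimeZero (chainM t (fun n => Z n ω))}
          ≤ ENNReal.ofReal (A * Real.exp (-c * s)))
      ∧ ∀ v t : ℕ, ∀ s : ℝ, 0 ≤ s →
          P {ω | ENNReal.ofReal (10 * t + s)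
              < retTimeLe (chainM (t + v) (fun n => Z n ω)) v}
            ≤ ENNReal.ofReal (A * Real.exp (-c * s)) :=
  return_time_exponential_tail_general P q hq0 hq1 Z hmeas hindep hgeom

end
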